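/- arXiv:1202.6085 — 2 statements merged into one kernel-verified Lean document; each statement's English description precedes it below -/
import Mathlib

section
/- Let G be a connected graph (with a loop at every vertex), r ≡ 0 (mod 3), r ≥ 6, and diam(G) ≥ r. If x, y are vertices with 2 < d(x,y) < r, then x is sufficient or y is sufficient, where a vertex v is sufficient if |N^r(v)| ≥ (r/3 + 1)·δ(G). -/
/-- The ball of radius `r` around `v` (the `r`-th neighbourhood `N^r(v)`). -/
def SimpleGraph.ballNat {V : Type*} (G : SimpleGraph V) (r : ℕ) (v : V) : Set V :=
  {u : V | G.dist v u ≤ r}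

/-- A vertex is *sufficient* if `|N^r(v)| ≥ (r/3 + 1)·δ`, where `δ = G.minDegree + 1`
is the minimum degree of the graph with a loop at every vertex. -/
def SimpleGraph.Sufficient {V : Type*} [Fintype V] (G : SimpleGraph V)
    [DecidableRel G.Adj] (r : ℕ) (v : V) : Prop :=
  (r / 3 + 1) * (G.minDegree + 1) ≤ (G.ballNat r v).ncard

/-! Vertices pairwise at distance at least 3 have disjoint closed neighbourhoods of at least
`δ = minDegree + 1` vertices each, so a vertex whose `r`-ball contains the closed neighbourhoods
of `r / 3 + 1` such vertices is sufficient. Along a geodesic the vertices at positions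
`0, 3, 6, …` are such a family. If the `r`-ball of `x` is everything, the family on a geodesic of
length `≥ r` witnessing the diameter works. Otherwise follow a geodesic from `x` of length `≥ r`.
If `y` is within distance 2 of one of its vertices at position `3i` with `0 < i < r / 3`, then
`y` is within distance `r - 1` of all vertices at positions `0, 3, …, 3⌊r/3⌋`; if not, `y`
together with the vertices at positions `0, 3, …, 3(⌊r/3⌋ - 1)` is a family for `x`. -/
namespace SimpleGraph

variable {V : Type*} {G : SimpleGraph V}

lemma Walk.dist_getVert_getVert_le {u v : V} (w : G.Walk u v) {i j : ℕ} (hij : i ≤ j) :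
    G.dist (w.getVert i) (w.getVert j) ≤ j - i := by
  have := dist_le ((w.drop i).take (j - i))
  simp only [Walk.drop_getVert, Nat.add_sub_cancel' hij, Walk.take_length] at this
  exact this.trans (min_le_left _ _)

lemma Walk.dist_getVert_getVert_of_length_eq_dist {u v : V} {w : G.Walk u v}
    (hw : w.length = G.dist u v) {i j : ℕ} (hij : i ≤ j) (hj : j ≤ w.length) :
    G.dist (w.getVert i) (w.getVert j) = j - i := by
  have hu : G.Reachable u (w.getVert i) := ⟨w.take i⟩
  have hv : G.Reachable (w.getVert j) v := ⟨w.drop j⟩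
  have h₁ := (hu.dist_triangle_left (w.getVert j)).trans
    (Nat.add_le_add_right (w.getVert_zero ▸ w.dist_getVert_getVert_le (Nat.zero_le i)) _)
  have h₂ := (hv.dist_triangle_right u).trans
    (Nat.add_le_add_left (w.getVert_length ▸ w.dist_getVert_getVert_le hj) _)
  have h₃ := w.dist_getVert_getVert_le hij
  omega

lemma Walk.pairwise_three_le_dist_getVert_three_mul {u v : V} {w : G.Walk u v}
    (hw : w.length = G.dist u v) {m : ℕ} (hm : 3 * m ≤ w.length) :
    (↑(Finset.range (m + 1)) : Set ℕ).Pairwise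
      fun i j => 3 ≤ G.dist (w.getVert (3 * i)) (w.getVert (3 * j)) := by
  intro i hi j hj hij
  simp only [Finset.coe_range, Set.mem_Iio] at hi hj
  rcases le_total i j with h | h
  · rw [w.dist_getVert_getVert_of_length_eq_dist hw (by omega) (by omega)]
    omega
  · rw [dist_comm, w.dist_getVert_getVert_of_length_eq_dist hw (by omega) (by omega)]
    omega

lemma ballNat_subset_ballNat (hG : G.Connected) {v w : V} {s t : ℕ}
    (h : G.dist v w + s ≤ t) : G.ballNat s w ⊆ G.ballNat t v := fun u hu =>
  (hG.dist_triangle (v := w)).trans (by simp only [ballNat, Set.mem_ofPred_eq] at hu ⊢; omega)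

lemma disjoint_ballNat_of_add_lt_dist (hG : G.Connected) {v w : V} {s t : ℕ}
    (h : s + t < G.dist v w) : Disjoint (G.ballNat s v) (G.ballNat t w) :=
  Set.disjoint_left.mpr fun u hv hw => by
    have := hG.dist_triangle (u := v) (v := u) (w := w)
    simp only [ballNat, Set.mem_ofPred_eq] at hv hw
    rw [dist_comm] at hw
    omega

section Finite

variable [Fintype V] [DecidableRel G.Adj]

lemma minDegree_add_one_le_ncard_ballNat_one (v : V) :
    G.minDegree + 1 ≤ (G.ballNat 1 v).ncard := by
  classical
  have hsub : (↑(insert v (G.neighborFinset v)) : Set V) ⊆ G.ballNat 1 v := by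
    intro u hu
    rcases Finset.mem_insert.mp hu with rfl | hadj
    · simp [ballNat]
    · exact dist_le ((G.mem_neighborFinset v u).mp hadj).toWalk
  calc G.minDegree + 1 ≤ G.degree v + 1 := Nat.add_le_add_right (G.minDegree_le_degree v) 1
    _ = (insert v (G.neighborFinset v)).card := by
      rw [Finset.card_insert_of_notMem (by simp), card_neighborFinset_eq_degree]
    _ ≤ (G.ballNat 1 v).ncard := Set.ncard_coe_finset _ ▸ Set.ncard_le_ncard hsub

open Finset in
lemma card_mul_le_ncard_of_ballNat_one_subset (hG : G.Connected) {ι : Type*} {s : Finset ι}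
    {c : ι → V} (hsep : (s : Set ι).Pairwise fun i j => 3 ≤ G.dist (c i) (c j))
    {T : Set V} (hT : ∀ i ∈ s, G.ballNat 1 (c i) ⊆ T) :
    #s * (G.minDegree + 1) ≤ T.ncard :=
  calc #s * (G.minDegree + 1) = ∑ _i ∈ s, (G.minDegree + 1) := by rw [sum_const, smul_eq_mul]
    _ ≤ ∑ i ∈ s, (G.ballNat 1 (c i)).ncard :=
      sum_le_sum fun i _ => G.minDegree_add_one_le_ncard_ballNat_one (c i)
    _ = (⋃ i ∈ s, G.ballNat 1 (c i)).ncard := by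
      rw [← Finset.set_biUnion_coe, s.finite_toSet.ncard_biUnion (fun _ _ => Set.toFinite _)
        fun i _ j _ hij => disjoint_ballNat_of_add_lt_dist hG (hsep ‹_› ‹_› hij),
        finsum_mem_coe_finset]
    _ ≤ T.ncard := Set.ncard_le_ncard (Set.iUnion₂_subset hT)

lemma Sufficient.of_pairwise_three_le_dist (hG : G.Connected) {r : ℕ} {v : V} {ι : Type*}
    {s : Finset ι} {c : ι → V} (hs : r / 3 + 1 ≤ s.card)
    (hsep : (s : Set ι).Pairwise fun i j => 3 ≤ G.dist (c i) (c j))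
    (hc : ∀ i ∈ s, G.dist v (c i) < r) : G.Sufficient r v :=
  (Nat.mul_le_mul_right _ hs).trans <| card_mul_le_ncard_of_ballNat_one_subset hG hsep
    fun i hi => ballNat_subset_ballNat hG (Nat.succ_le_of_lt (hc i hi))

variable {r : ℕ} {x y z : V} {w : G.Walk x z}

lemma Sufficient.of_dist_getVert_three_mul_le_two (hG : G.Connected)
    (hw : w.length = G.dist x z) (hr : r ≤ w.length) {i : ℕ} (hi₀ : i ≠ 0) (hi : i < r / 3)
    (hy : G.dist y (w.getVert (3 * i)) ≤ 2) : G.Sufficient r y := by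
  refine .of_pairwise_three_le_dist hG (Finset.card_range _).ge
    (w.pairwise_three_le_dist_getVert_three_mul hw (by omega)) fun k hk => ?_
  rw [Finset.mem_range] at hk
  have hyk := hG.dist_triangle (u := y) (v := w.getVert (3 * i)) (w := w.getVert (3 * k))
  rcases le_total i k with h | h
  · rw [w.dist_getVert_getVert_of_length_eq_dist hw (by omega) (by omega)] at hyk
    omega
  · rw [dist_comm (u := w.getVert (3 * i)),
      w.dist_getVert_getVert_of_length_eq_dist hw (by omega) (by omega)] at hyk
    omega

lemma Sufficient.of_three_le_dist_getVert_three_mul (hG : G.Connected)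
    (hw : w.length = G.dist x z) (hr : r ≤ w.length) (hxy : G.dist x y < r)
    (hy : ∀ i < r / 3, 3 ≤ G.dist y (w.getVert (3 * i))) : G.Sufficient r x := by
  refine .of_pairwise_three_le_dist hG (Finset.card_range (r / 3 + 1)).ge
    (c := fun k => if k < r / 3 then w.getVert (3 * k) else y) ?_ fun k hk => ?_
  · intro i hi j hj hij
    have hsep := w.pairwise_three_le_dist_getVert_three_mul hw (m := r / 3) (by omega) hi hj hij
    simp only [Finset.coe_range, Set.mem_Iio] at hi hj
    split_ifs with h₁ h₂ h₂
    · exact hsep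
    · exact dist_comm (G := G) ▸ hy i h₁
    · exact hy j h₂
    · omega
  · split_ifs with h
    · have hxk := w.dist_getVert_getVert_of_length_eq_dist hw (Nat.zero_le (3 * k)) (by omega)
      rw [w.getVert_zero] at hxk
      omega
    · exact hxy

end Finite

end SimpleGraph

theorem edge_growth_middle_distance_sufficient_general {V : Type*} [Fintype V]
    (G : SimpleGraph V) [DecidableRel G.Adj] (hG : G.Connected)
    (r : ℕ)
    (hdiam : ∃ u w : V, r ≤ G.dist u w)
    (x y : V) (h2 : 2 < G.dist x y) (hlt : G.dist x y < r) :
    G.Sufficient r x ∨ G.Sufficient r y := by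
  by_cases hfar : ∃ z, r ≤ G.dist x z
  · obtain ⟨z, hz⟩ := hfar
    obtain ⟨w, hw⟩ := hG.exists_walk_length_eq_dist x z
    by_cases hnear : ∃ i < r / 3, G.dist y (w.getVert (3 * i)) ≤ 2
    · obtain ⟨i, hi, hyi⟩ := hnear
      have hi₀ : i ≠ 0 := by
        rintro rfl
        rw [Nat.mul_zero, w.getVert_zero, SimpleGraph.dist_comm] at hyi
        omega
      exact .inr <| .of_dist_getVert_three_mul_le_two hG hw (hw ▸ hz) hi₀ hi hyi
    · push Not at hnear
      exact .inl <| .of_three_le_dist_getVert_three_mul hG hw (hw ▸ hz) hlt hnear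
  · push Not at hfar
    obtain ⟨u, v, huv⟩ := hdiam
    obtain ⟨w, hw⟩ := hG.exists_walk_length_eq_dist u v
    exact .inl <| .of_pairwise_three_le_dist hG (Finset.card_range _).ge
      (w.pairwise_three_le_dist_getVert_three_mul hw (by omega)) fun k _ => hfar _

/-- if `r ≡ 0 (mod 3)`, `r ≥ 6`, `diam(G) ≥ r` and `2 < d(x,y) < r`,
then `x` or `y` is sufficient. -/
theorem edge_growth_middle_distance_sufficient {V : Type*} [Fintype V]
    (G : SimpleGraph V) [DecidableRel G.Adj] (hG : G.Connected)
    (r : ℕ) (hr3 : r % 3 = 0) (hr : 6 ≤ r)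
    (hdiam : ∃ u w : V, r ≤ G.dist u w)
    (x y : V) (h2 : 2 < G.dist x y) (hlt : G.dist x y < r) :
    G.Sufficient r x ∨ G.Sufficient r y :=
  edge_growth_middle_distance_sufficient_general G hG r hdiam x y h2 hlt
end

section
/- Let G be a connected simple graph with minimum degree δ(G), and let r ≥ 6 with r ≢ 0 (mod 3) and diam(G) ≥ r. Then e(G^r) ≥ (1/2)·⌈r/3⌉·δ(G)·|G|. -/
/-!
Along a geodesic starting at a vertex `v`, the vertices at distances `0, 3, …, 3m` from `v` have
pairwise disjoint closed neighbourhoods, each with at least `δ + 1` vertices and all within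
distance `3m + 1` of `v`. With `m = ⌈r/3⌉ - 1` this gives every vertex `v` at least
`⌈r/3⌉ (δ + 1)` vertices within distance `r`: follow a geodesic from `v` to a vertex farther than
`r` if there is one; otherwise everything is within distance `r` of `v`, and a geodesic between
two vertices at distance `≥ r` does the job. So `G^r` has minimum degree at least `⌈r/3⌉ δ`, and
the handshake lemma finishes.
-/

/-- The `r`-th power of a graph: two distinct vertices are adjacent whenever they are
within distance `r` of each other. -/
def SimpleGraph.power {V : Type*} (G : SimpleGraph V) (r : ℕ) : SimpleGraph V where
  Adj u v := u ≠ v ∧ G.dist u v ≤ r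
  symm := ⟨fun u v h => ⟨h.1.symm, by rw [SimpleGraph.dist_comm]; exact h.2⟩⟩
  loopless := ⟨fun v h => h.1 rfl⟩

open Finset

lemma Int.ceil_natCast_div_three_le (r : ℕ) : ⌈(r : ℝ) / 3⌉ ≤ ((r - 1) / 3 + 1 : ℕ) := by
  rw [Int.ceil_le, Int.cast_natCast, div_le_iff₀ three_pos]
  exact_mod_cast (by omega : r ≤ ((r - 1) / 3 + 1) * 3)

namespace SimpleGraph

variable {V : Type*} {G : SimpleGraph V}

lemma Walk.dist_getVert_of_length_eq_dist {u v : V} (p : G.Walk u v)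
    (hp : p.length = G.dist u v) {i : ℕ} (hi : i ≤ p.length) :
    G.dist u (p.getVert i) = i := by
  have hto : G.dist u (p.getVert i) ≤ i := by
    simpa [hi] using G.dist_le (p.take i)
  have hfrom : G.dist (p.getVert i) v ≤ p.length - i := by
    simpa using G.dist_le (p.drop i)
  have := (p.drop i).reachable.dist_triangle_right u
  omega

section closedNeighborFinset

variable [Fintype V] [DecidableRel G.Adj] [DecidableEq V]

variable (G) in
def closedNeighborFinset (v : V) : Finset V := insert v (G.neighborFinset v)

lemma card_closedNeighborFinset (v : V) : #(G.closedNeighborFinset v) = G.degree v + 1 := by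
  simp [closedNeighborFinset]

lemma dist_le_add_one_of_mem_closedNeighborFinset {x y : V} (hy : y ∈ G.closedNeighborFinset x)
    (u : V) : G.dist u y ≤ G.dist u x + 1 := by
  rcases mem_insert.mp hy with rfl | hadj
  · omega
  · have := (G.mem_neighborFinset x y).mp hadj |>.diff_dist_adj (u := u)
    omega

lemma dist_center_le_add_one_of_mem_closedNeighborFinset {x y : V}
    (hy : y ∈ G.closedNeighborFinset x) (u : V) : G.dist u x ≤ G.dist u y + 1 := by
  rcases mem_insert.mp hy with rfl | hadj
  · omega
  · have := (G.mem_neighborFinset x y).mp hadj |>.diff_dist_adj (u := u)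
    omega

lemma disjoint_closedNeighborFinset_of_dist_add_two_lt {u x x' : V}
    (h : G.dist u x + 2 < G.dist u x') :
    Disjoint (G.closedNeighborFinset x) (G.closedNeighborFinset x') := by
  refine Finset.disjoint_left.mpr fun y hy hy' => ?_
  have := dist_le_add_one_of_mem_closedNeighborFinset hy u
  have := dist_center_le_add_one_of_mem_closedNeighborFinset hy' u
  omega

lemma le_card_filter_dist_le {v z : V} (hvz : G.Reachable v z) {m r : ℕ}
    (hz : 3 * m ≤ G.dist v z) (hr : 3 * m + 1 ≤ r) :
    (m + 1) * (G.minDegree + 1) ≤ #{y | G.dist v y ≤ r} := by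
  obtain ⟨p, hp⟩ := hvz.exists_walk_length_eq_dist
  set x : ℕ → V := fun i => p.getVert (3 * i)
  have hx : ∀ i ∈ range (m + 1), G.dist v (x i) = 3 * i := fun i hi =>
    p.dist_getVert_of_length_eq_dist hp (by rw [mem_range] at hi; omega)
  have hdisj : (range (m + 1) : Set ℕ).PairwiseDisjoint (G.closedNeighborFinset ∘ x) := by
    intro i hi j hj hij
    rcases hij.lt_or_gt with h | h
    · exact disjoint_closedNeighborFinset_of_dist_add_two_lt (u := v)
        (by rw [hx i hi, hx j hj]; omega)
    · exact (disjoint_closedNeighborFinset_of_dist_add_two_lt (u := v)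
        (by rw [hx i hi, hx j hj]; omega)).symm
  have hsub :
      (range (m + 1)).biUnion (G.closedNeighborFinset ∘ x) ⊆ ({y | G.dist v y ≤ r} : Finset V) := by
    intro y hy
    obtain ⟨i, hi, hyi⟩ := mem_biUnion.mp hy
    have := dist_le_add_one_of_mem_closedNeighborFinset hyi v
    rw [hx i hi] at this
    rw [mem_range] at hi
    rw [mem_filter]
    exact ⟨mem_univ y, by omega⟩
  calc (m + 1) * (G.minDegree + 1) = #(range (m + 1)) • (G.minDegree + 1) := by simp
    _ ≤ ∑ i ∈ range (m + 1), #(G.closedNeighborFinset (x i)) :=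
        card_nsmul_le_sum _ _ _ fun i _ => by
          rw [card_closedNeighborFinset]; exact Nat.add_le_add_right (G.minDegree_le_degree _) 1
    _ = #((range (m + 1)).biUnion (G.closedNeighborFinset ∘ x)) := (card_biUnion hdisj).symm
    _ ≤ #{y | G.dist v y ≤ r} := card_le_card hsub

end closedNeighborFinset

section power

variable [Fintype V] [DecidableEq V] {r : ℕ} [DecidableRel (G.power r).Adj]

lemma degree_power_add_one (v : V) : (G.power r).degree v + 1 = #{y | G.dist v y ≤ r} := by
  have hnbhd : (G.power r).neighborFinset v = ({y | G.dist v y ≤ r} : Finset V).erase v := by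
    ext y
    rw [mem_neighborFinset]
    simp [power, eq_comm]
  rw [← card_neighborFinset_eq_degree, hnbhd, card_erase_add_one (by simp)]

lemma le_degree_power [DecidableRel G.Adj] {u w : V} (hr : 0 < r) (huw : r ≤ G.dist u w)
    (v : V) : ((r - 1) / 3 + 1) * G.minDegree ≤ (G.power r).degree v := by
  have hm : 3 * ((r - 1) / 3) + 1 ≤ r := by omega
  suffices hball : ((r - 1) / 3 + 1) * (G.minDegree + 1) ≤ #{y | G.dist v y ≤ r} by
    rw [← degree_power_add_one] at hball
    nlinarith
  by_cases hfar : ∃ z, r < G.dist v z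
  · obtain ⟨z, hz⟩ := hfar
    have hvz : G.Reachable v z := Reachable.of_dist_ne_zero (by omega)
    exact le_card_filter_dist_le hvz (by omega) hm
  · push Not at hfar
    have huw' : G.Reachable u w := Reachable.of_dist_ne_zero (by omega)
    calc _ ≤ #{y | G.dist u y ≤ r} := le_card_filter_dist_le huw' (by omega) hm
      _ ≤ #(univ : Finset V) := card_le_univ _
      _ = #{y | G.dist v y ≤ r} := by rw [filter_true_of_mem fun y _ => hfar y]

end power

lemma mul_card_le_two_mul_card_edgeFinset [Fintype V] [DecidableRel G.Adj] {d : ℕ}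
    (h : ∀ v, d ≤ G.degree v) : d * Fintype.card V ≤ 2 * #G.edgeFinset := by
  rw [← sum_degrees_eq_twice_card_edges, mul_comm, ← smul_eq_mul, ← card_univ]
  exact card_nsmul_le_sum _ _ _ fun v _ => h v

end SimpleGraph

theorem edge_growth_simple_ne_zero_mod_three_general {V : Type*} [Fintype V]
    (G : SimpleGraph V) [DecidableRel G.Adj]
    (r : ℕ) (hr : 6 ≤ r)
    (hdiam : ∃ u w : V, r ≤ G.dist u w) :
    (1 / 2 : ℝ) * (⌈(r : ℝ) / 3⌉ : ℝ) * G.minDegree * Nat.card V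
      ≤ ((G.power r).edgeSet.ncard : ℝ) := by
  classical
  obtain ⟨u, w, huw⟩ := hdiam
  have hedges : (((r - 1) / 3 + 1 : ℕ) : ℝ) * G.minDegree * Fintype.card V
      ≤ 2 * #(G.power r).edgeFinset := by
    exact_mod_cast SimpleGraph.mul_card_le_two_mul_card_edgeFinset
      (SimpleGraph.le_degree_power (by omega) huw)
  rw [Nat.card_eq_fintype_card, ← SimpleGraph.coe_edgeFinset, Set.ncard_coe_finset]
  calc (1 / 2 : ℝ) * ⌈(r : ℝ) / 3⌉ * G.minDegree * Fintype.card V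
      ≤ 1 / 2 * (((r - 1) / 3 + 1 : ℕ) : ℝ) * G.minDegree * Fintype.card V := by
        gcongr
        exact (Int.cast_le.mpr (Int.ceil_natCast_div_three_le r)).trans_eq (Int.cast_natCast _)
    _ ≤ #(G.power r).edgeFinset := by linarith

/-- for a connected simple graph `G` with `r ≥ 6`, `r ≢ 0 (mod 3)` and
`diam(G) ≥ r`, we have `e(G^r) ≥ (1/2)·⌈r/3⌉·δ(G)·|G|`. -/
theorem edge_growth_simple_ne_zero_mod_three {V : Type*} [Fintype V]
    (G : SimpleGraph V) [DecidableRel G.Adj] (hG : G.Connected)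
    (r : ℕ) (hr3 : r % 3 ≠ 0) (hr : 6 ≤ r)
    (hdiam : ∃ u w : V, r ≤ G.dist u w) :
    (1 / 2 : ℝ) * (⌈(r : ℝ) / 3⌉ : ℝ) * G.minDegree * Nat.card V
      ≤ ((G.power r).edgeSet.ncard : ℝ) :=
  edge_growth_simple_ne_zero_mod_three_general G r hr hdiam
end
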